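/- arXiv:2603.26339 — 3 statements merged into one kernel-verified Lean document; each statement's English description precedes it below -/
import Mathlib

section
/- Let μ ∈ ℝ, σ > 0, σₙ > 0, set S = σ² + σₙ², K = σ²/S, σ₊² = σ²σₙ²/S, and for y ∈ ℝ let μ⁺(y) = μ + K·(y − μ). Then the expectation over y ~ N(μ, S) of the univariate Gaussian KL divergence from N(μ⁺(y), σ₊²) to N(μ, σ²) satisfies ∫ (1/2)·[σ₊²/σ² + (μ⁺(y) − μ)²/σ² − 1 + log(σ²/σ₊²)] d(N(μ, S))(y) = (1/2)·log(1 + σ²/σₙ²). -/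
/-!
Since `μ⁺(y) − μ = K (y − μ)`, the integrand is `a + b (y − μ)²` with constants `a, b`, so its
expectation under `N(μ, S)` is `a + b S`. The variance terms then cancel:
`σ₊²/σ² + K² S/σ² = σₙ²/S + σ²/S = 1`, leaving `(1/2) log (σ²/σ₊²) = (1/2) log (S/σₙ²)`.
-/

open MeasureTheory ProbabilityTheory Real
open scoped NNReal

namespace ProbabilityTheory

variable {μ : ℝ} {v : ℝ≥0}

lemma integrable_sub_sq_gaussianReal : Integrable (fun y ↦ (y - μ) ^ 2) (gaussianReal μ v) :=
  ((memLp_id_gaussianReal 2).sub (memLp_const μ)).integrable_sq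

lemma integral_sub_sq_gaussianReal : ∫ y, (y - μ) ^ 2 ∂gaussianReal μ v = v := by
  have h := variance_eq_integral (μ := gaussianReal μ v) measurable_id'.aemeasurable
  rwa [variance_fun_id_gaussianReal, integral_id_gaussianReal, eq_comm] at h

lemma integral_const_add_mul_sub_sq_gaussianReal (a b : ℝ) :
    ∫ y, (a + b * (y - μ) ^ 2) ∂gaussianReal μ v = a + b * v := by
  rw [integral_add (integrable_const a) (integrable_sub_sq_gaussianReal.const_mul b),
    integral_const, integral_const_mul, integral_sub_sq_gaussianReal, probReal_univ, one_smul]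

end ProbabilityTheory

/-- The expected KL divergence from the Gaussian posterior `N(μ⁺(y), σ₊²)` to the
prior `N(μ, σ²)`, averaged over `y ~ N(μ, S)` with `S = σ² + σₙ²`, `K = σ²/S`,
`σ₊² = σ²σₙ²/S`, `μ⁺(y) = μ + K(y − μ)`, equals `(1/2)·log(1 + σ²/σₙ²)`. -/
theorem efe_epistemic_term (μ σ σₙ : ℝ) (hσ : 0 < σ) (hσₙ : 0 < σₙ) :
    ∫ y, (1 / 2) *
          ((σ ^ 2 * σₙ ^ 2 / (σ ^ 2 + σₙ ^ 2)) / σ ^ 2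
            + ((μ + (σ ^ 2 / (σ ^ 2 + σₙ ^ 2)) * (y - μ)) - μ) ^ 2 / σ ^ 2
            - 1
            + Real.log (σ ^ 2 / (σ ^ 2 * σₙ ^ 2 / (σ ^ 2 + σₙ ^ 2))))
        ∂(gaussianReal μ (σ ^ 2 + σₙ ^ 2).toNNReal)
      = (1 / 2) * Real.log (1 + σ ^ 2 / σₙ ^ 2) := by
  set S := σ ^ 2 + σₙ ^ 2 with hS_def
  have hS : 0 < S := by positivity
  have hlog : σ ^ 2 / (σ ^ 2 * σₙ ^ 2 / S) = 1 + σ ^ 2 / σₙ ^ 2 := by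
    rw [hS_def]
    field_simp
    ring
  have hquad : ∀ y, (1 / 2) * ((σ ^ 2 * σₙ ^ 2 / S) / σ ^ 2
      + ((μ + (σ ^ 2 / S) * (y - μ)) - μ) ^ 2 / σ ^ 2 - 1 + Real.log (σ ^ 2 / (σ ^ 2 * σₙ ^ 2 / S)))
      = (1 / 2) * (σₙ ^ 2 / S - 1 + Real.log (1 + σ ^ 2 / σₙ ^ 2))
        + σ ^ 2 / (2 * S ^ 2) * (y - μ) ^ 2 := by
    intro y
    rw [hlog]
    field_simp
    ring
  simp_rw [hquad]
  rw [integral_const_add_mul_sub_sq_gaussianReal, Real.coe_toNNReal S hS.le]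
  field_simp
  ring
end

section
/- Let μ, y⋆ ∈ ℝ, σ > 0, σₙ > 0, τ > 0, and set S = σ² + σₙ², K = σ²/S, σ₊² = σ²σₙ²/S, μ⁺(y) = μ + K·(y − μ). Then the Expected Free Energy at the query point, defined as the pragmatic value minus the epistemic value, satisfies ∫ [(y − y⋆)²/(2τ²) + (1/2)log(2πτ²)] d(N(μ, S))(y) − ∫ (1/2)[σ₊²/σ² + (μ⁺(y) − μ)²/σ² − 1 + log(σ²/σ₊²)] d(N(μ, S))(y) = (μ − y⋆)²/(2τ²) + (σ² + σₙ²)/(2τ²) − (1/2)·log(1 + σ²/σₙ²) + (1/2)·log(2πτ²). -/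
open MeasureTheory ProbabilityTheory Real
open scoped NNReal ENNReal

lemma efe_odd_int (b : ℝ) : ∫ x : ℝ, x * Real.exp (-b * x ^ 2) = 0 := by
  have h := integral_neg_eq_self (fun x : ℝ => x * Real.exp (-b * x ^ 2)) (volume : Measure ℝ)
  simp only [neg_sq, neg_mul] at h
  rw [integral_neg] at h
  simp only [neg_mul]
  linarith

lemma efe_sq_int {b : ℝ} (hb : 0 < b) :
    ∫ x : ℝ, x ^ 2 * Real.exp (-b * x ^ 2) = Real.sqrt π / (2 * b * Real.sqrt b) := by
  have h0 : (fun x : ℝ => x ^ 2 * Real.exp (-b * x ^ 2))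
      = fun x : ℝ => |x| ^ 2 * Real.exp (-b * |x| ^ 2) := by
    funext x; rw [sq_abs]
  have h1 : ∫ x : ℝ, x ^ 2 * Real.exp (-b * x ^ 2)
      = 2 * ∫ x in Set.Ioi (0:ℝ), x ^ 2 * Real.exp (-b * x ^ 2) := by
    conv_lhs => rw [h0]
    exact integral_comp_abs (f := fun x : ℝ => x ^ 2 * Real.exp (-b * x ^ 2))
  have h2 : ∫ x in Set.Ioi (0:ℝ), x ^ (2:ℝ) * Real.exp (-b * x ^ (2:ℝ))
      = b ^ (-((2:ℝ) + 1) / 2) * (1 / 2) * Real.Gamma (((2:ℝ) + 1) / 2) :=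
    integral_rpow_mul_exp_neg_mul_rpow (by norm_num) (by norm_num) hb
  have hcast : ∀ x : ℝ, x ^ (2:ℝ) = x ^ (2:ℕ) := fun x => by
    rw [show ((2:ℝ)) = ((2:ℕ):ℝ) by norm_num, Real.rpow_natCast]
  simp only [hcast] at h2
  have hG : Real.Gamma (((2:ℝ) + 1) / 2) = Real.sqrt π / 2 := by
    rw [show ((2:ℝ) + 1) / 2 = 1/2 + 1 by norm_num, Real.Gamma_add_one (by norm_num),
      Real.Gamma_one_half_eq]
    ring
  have hb' : b ^ (-((2:ℝ) + 1) / 2) = (b * Real.sqrt b)⁻¹ := by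
    rw [show (-((2:ℝ) + 1) / 2) = -(1 + 1/2) by norm_num, Real.rpow_neg hb.le,
      Real.rpow_add hb, Real.rpow_one, ← Real.sqrt_eq_rpow]
  rw [h1, h2, hG, hb']
  have hsb : Real.sqrt b > 0 := Real.sqrt_pos.mpr hb
  field_simp

lemma efe_gaussian_int_eq (m : ℝ) {v : ℝ} (hv : 0 < v) (g : ℝ → ℝ) :
    ∫ y, g y ∂(gaussianReal m v.toNNReal)
      = ∫ x, gaussianPDFReal m v.toNNReal x * g x := by
  have hV : v.toNNReal ≠ 0 := by
    simp only [ne_eq, Real.toNNReal_eq_zero, not_le]; exact hv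
  rw [gaussianReal_of_var_ne_zero m hV]
  have : Measure.withDensity volume (gaussianPDF m v.toNNReal)
      = Measure.withDensity volume
        (fun x => ((Real.toNNReal (gaussianPDFReal m v.toNNReal x) : ℝ≥0) : ℝ≥0∞)) := rfl
  rw [this, integral_withDensity_eq_integral_smul
    ((measurable_gaussianPDFReal m v.toNNReal).real_toNNReal) g]
  congr 1
  funext x
  rw [NNReal.smul_def, smul_eq_mul, Real.coe_toNNReal _ (gaussianPDFReal_nonneg m v.toNNReal x)]

lemma efe_rpow_two (x : ℝ) : x ^ (2:ℝ) = x ^ (2:ℕ) := by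
  rw [show ((2:ℝ)) = ((2:ℕ):ℝ) by norm_num, Real.rpow_natCast]

lemma efe_gaussian_quadratic (m : ℝ) {v : ℝ} (hv : 0 < v) (a b c : ℝ) :
    ∫ y, (a * (y - m) ^ 2 + b * (y - m) + c) ∂(gaussianReal m v.toNNReal)
      = a * v + c := by
  have hcoe : ((v.toNNReal : ℝ≥0) : ℝ) = v := Real.coe_toNNReal _ hv.le
  set c0 : ℝ := (Real.sqrt (2 * π * v))⁻¹ with hc0
  set bb : ℝ := (2 * v)⁻¹ with hbb
  have hbbpos : 0 < bb := by positivity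
  have hpdf : ∀ x, gaussianPDFReal m v.toNNReal x = c0 * rexp (-bb * (x - m) ^ 2) := by
    intro x
    simp only [gaussianPDFReal_def, hcoe, hc0, hbb]
    congr 1
    ring
  rw [efe_gaussian_int_eq m hv]
  have hint : (fun x => gaussianPDFReal m v.toNNReal x * (a * (x - m) ^ 2 + b * (x - m) + c))
      = fun x => (c0 * a) * ((x - m) ^ 2 * rexp (-bb * (x - m) ^ 2))
          + ((c0 * b) * ((x - m) * rexp (-bb * (x - m) ^ 2))
          + (c0 * c) * rexp (-bb * (x - m) ^ 2)) := by
    funext x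
    rw [hpdf x]
    ring
  rw [hint]
  have hi1 : Integrable (fun t : ℝ => t ^ 2 * rexp (-bb * t ^ 2)) := by
    have h := integrable_rpow_mul_exp_neg_mul_sq hbbpos (s := 2) (by norm_num)
    simpa only [efe_rpow_two] using h
  have hi2 : Integrable (fun t : ℝ => t * rexp (-bb * t ^ 2)) :=
    integrable_mul_exp_neg_mul_sq hbbpos
  have hi3 : Integrable (fun t : ℝ => rexp (-bb * t ^ 2)) :=
    integrable_exp_neg_mul_sq hbbpos
  have ha1 : Integrable (fun x : ℝ => (c0 * a) * ((x - m) ^ 2 * rexp (-bb * (x - m) ^ 2))) :=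
    (hi1.comp_sub_right m).const_mul _
  have ha2 : Integrable (fun x : ℝ => (c0 * b) * ((x - m) * rexp (-bb * (x - m) ^ 2))) :=
    (hi2.comp_sub_right m).const_mul _
  have ha3 : Integrable (fun x : ℝ => (c0 * c) * rexp (-bb * (x - m) ^ 2)) :=
    (hi3.comp_sub_right m).const_mul _
  have ha23 : Integrable (fun x : ℝ => (c0 * b) * ((x - m) * rexp (-bb * (x - m) ^ 2))
      + (c0 * c) * rexp (-bb * (x - m) ^ 2)) := ha2.add ha3
  rw [integral_add ha1 ha23, integral_add ha2 ha3,
    integral_const_mul, integral_const_mul, integral_const_mul]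
  have e1 : ∫ x : ℝ, (x - m) ^ 2 * rexp (-bb * (x - m) ^ 2)
      = ∫ t : ℝ, t ^ 2 * rexp (-bb * t ^ 2) :=
    integral_sub_right_eq_self (fun t : ℝ => t ^ 2 * rexp (-bb * t ^ 2)) m
  have e2 : ∫ x : ℝ, (x - m) * rexp (-bb * (x - m) ^ 2)
      = ∫ t : ℝ, t * rexp (-bb * t ^ 2) :=
    integral_sub_right_eq_self (fun t : ℝ => t * rexp (-bb * t ^ 2)) m
  have e3 : ∫ x : ℝ, rexp (-bb * (x - m) ^ 2) = ∫ t : ℝ, rexp (-bb * t ^ 2) :=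
    integral_sub_right_eq_self (fun t : ℝ => rexp (-bb * t ^ 2)) m
  rw [e1, e2, e3, efe_sq_int hbbpos, efe_odd_int, integral_gaussian]
  -- now pure algebra
  set s : ℝ := Real.sqrt (2 * v) with hsdef
  have hspos : 0 < s := Real.sqrt_pos.mpr (by positivity)
  have hs2 : s ^ 2 = 2 * v := Real.sq_sqrt (by positivity)
  have hppos : 0 < Real.sqrt π := Real.sqrt_pos.mpr pi_pos
  have h1 : Real.sqrt (2 * π * v) = Real.sqrt π * s := by
    rw [show 2 * π * v = π * (2 * v) by ring, Real.sqrt_mul pi_pos.le]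
  have h2 : Real.sqrt bb = s⁻¹ := by
    rw [hbb, Real.sqrt_inv]
  have h3 : Real.sqrt (π / bb) = Real.sqrt π * s := by
    rw [hbb, show π / (2 * v)⁻¹ = π * (2 * v) by field_simp, Real.sqrt_mul pi_pos.le]
  rw [hc0, h1, h2, h3, hbb]
  have hv' : v ≠ 0 := hv.ne'
  field_simp
  nlinarith [hs2, hspos, hppos, sq_nonneg s, sq_nonneg (Real.sqrt π)]

/-- Compact form of the Expected Free Energy: pragmatic value minus epistemic
value equals `(μ − y⋆)²/(2τ²) + (σ² + σₙ²)/(2τ²) − (1/2)log(1 + σ²/σₙ²)` up to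
the additive constant `(1/2)log(2πτ²)`, where the expectations are over
`y ~ N(μ, S)`, `S = σ² + σₙ²`, `K = σ²/S`, `σ₊² = σ²σₙ²/S`, `μ⁺(y) = μ + K(y−μ)`. -/
theorem efe_compact_form (μ ystar σ σₙ τ : ℝ)
    (hσ : 0 < σ) (hσₙ : 0 < σₙ) (hτ : 0 < τ) :
    (∫ y, ((y - ystar) ^ 2 / (2 * τ ^ 2) + (1 / 2) * Real.log (2 * π * τ ^ 2))
        ∂(gaussianReal μ (σ ^ 2 + σₙ ^ 2).toNNReal))
    - (∫ y, (1 / 2) *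
          ((σ ^ 2 * σₙ ^ 2 / (σ ^ 2 + σₙ ^ 2)) / σ ^ 2
            + ((μ + (σ ^ 2 / (σ ^ 2 + σₙ ^ 2)) * (y - μ)) - μ) ^ 2 / σ ^ 2
            - 1
            + Real.log (σ ^ 2 / (σ ^ 2 * σₙ ^ 2 / (σ ^ 2 + σₙ ^ 2))))
        ∂(gaussianReal μ (σ ^ 2 + σₙ ^ 2).toNNReal))
      = (μ - ystar) ^ 2 / (2 * τ ^ 2)
        + (σ ^ 2 + σₙ ^ 2) / (2 * τ ^ 2)
        - (1 / 2) * Real.log (1 + σ ^ 2 / σₙ ^ 2)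
        + (1 / 2) * Real.log (2 * π * τ ^ 2) := by
  have hv : 0 < σ ^ 2 + σₙ ^ 2 := by positivity
  have hτ2 : (τ:ℝ) ^ 2 ≠ 0 := by positivity
  have hσ2 : (σ:ℝ) ^ 2 ≠ 0 := by positivity
  have hσₙ2 : (σₙ:ℝ) ^ 2 ≠ 0 := by positivity
  have hL : σ ^ 2 / (σ ^ 2 * σₙ ^ 2 / (σ ^ 2 + σₙ ^ 2)) = 1 + σ ^ 2 / σₙ ^ 2 := by
    field_simp
    ring
  have e1 : ∀ y : ℝ, (y - ystar) ^ 2 / (2 * τ ^ 2) + (1 / 2) * Real.log (2 * π * τ ^ 2)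
      = (2 * τ ^ 2)⁻¹ * (y - μ) ^ 2 + ((μ - ystar) / τ ^ 2) * (y - μ)
        + (((μ - ystar) ^ 2 + τ ^ 2 * Real.log (2 * π * τ ^ 2)) / (2 * τ ^ 2)) := by
    intro y
    field_simp
    ring
  have e2 : ∀ y : ℝ, (1 / 2 : ℝ) *
        ((σ ^ 2 * σₙ ^ 2 / (σ ^ 2 + σₙ ^ 2)) / σ ^ 2
          + ((μ + (σ ^ 2 / (σ ^ 2 + σₙ ^ 2)) * (y - μ)) - μ) ^ 2 / σ ^ 2
          - 1
          + Real.log (σ ^ 2 / (σ ^ 2 * σₙ ^ 2 / (σ ^ 2 + σₙ ^ 2))))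
      = ((σ ^ 2 / (σ ^ 2 + σₙ ^ 2)) ^ 2 / (2 * σ ^ 2)) * (y - μ) ^ 2 + 0 * (y - μ)
        + ((1 / 2) * ((σ ^ 2 * σₙ ^ 2 / (σ ^ 2 + σₙ ^ 2)) / σ ^ 2 - 1
            + Real.log (σ ^ 2 / (σ ^ 2 * σₙ ^ 2 / (σ ^ 2 + σₙ ^ 2))))) := by
    intro y
    ring
  simp only [e1, e2]
  rw [efe_gaussian_quadratic μ hv, efe_gaussian_quadratic μ hv, hL]
  have hvne : σ ^ 2 + σₙ ^ 2 ≠ 0 := hv.ne'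
  field_simp
  ring
end

section
/- Let μ, v : ℝ → ℝ, let c ∈ ℝ, m ∈ ℝ, v₀ > 0, g, v₂ ∈ ℝ, σₙ > 0, τ > 0, and set S = v₀ + σₙ² and Δ = 1/τ² − 1/S. Suppose (fun h => μ(h) − (c − (m/2)h²)) is O(|h|³) and (fun h => v(h) − (v₀ + g·h + (v₂/2)h²)) is O(|h|³) as h → 0, with v(h) > −σₙ² near 0. Define the maximization-form EFE acquisition a(h) = −[(μ(h) − c)²/(2τ²) + (v(h) + σₙ²)/(2τ²) − (1/2)·log(1 + v(h)/σₙ²)]. Then there exists a constant C ∈ ℝ such that (fun h => a(h) − (C + L·h + Q·h²)) is O(|h|³) as h → 0, where L = −(g/2)·Δ and Q = −(v₂/4)·Δ − g²/(4S²). -/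
open Filter Asymptotics Real

lemma abs_pow_isBigO_aux {m n : ℕ} (hmn : n ≤ m) :
    (fun h : ℝ => |h| ^ m) =O[nhds 0] fun h : ℝ => |h| ^ n := by
  refine IsBigO.of_bound 1 ?_
  have h1 : ∀ᶠ h : ℝ in nhds (0 : ℝ), |h| ≤ 1 := by
    have : ∀ᶠ h : ℝ in nhds (0 : ℝ), dist h 0 < 1 :=
      Metric.tendsto_nhds.mp tendsto_id 1 one_pos |>.mono (fun x hx => hx)
    filter_upwards [this] with h hh
    simpa [Real.dist_eq] using hh.le
  filter_upwards [h1] with h hh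
  simp only [Real.norm_eq_abs, abs_pow, abs_abs, one_mul]
  exact pow_le_pow_of_le_one (abs_nonneg _) hh hmn

lemma pow_self_isBigO (n : ℕ) :
    (fun h : ℝ => h ^ n) =O[nhds 0] fun h : ℝ => |h| ^ n := by
  refine IsBigO.of_bound 1 (Eventually.of_forall fun h => ?_)
  simp [abs_pow]

/-- Local quadratic model of the Expected Free Energy acquisition around the
true maximizer: with GP posterior mean `μ(h) = c − (m/2)h² + O(h³)` and latent
posterior variance `v(h) = v₀ + g·h + (v₂/2)h² + O(h³)` near `0`, `S = v₀ + σₙ²`,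
`Δ = 1/τ² − 1/S`, the maximization-form EFE
`a(h) = −[(μ(h) − c)²/(2τ²) + (v(h) + σₙ²)/(2τ²) − (1/2)log(1 + v(h)/σₙ²)]`
satisfies `a(h) = C + L·h + Q·h² + O(h³)` for some constant `C`, with
`L = −(g/2)Δ` and `Q = −(v₂/4)Δ − g²/(4S²)`. -/
theorem efe_local_quadratic_model (μ v : ℝ → ℝ) (c m v₀ g v₂ σₙ τ : ℝ)
    (hv₀ : 0 < v₀) (hσₙ : 0 < σₙ) (hτ : 0 < τ)
    (hμ : (fun h : ℝ => μ h - (c - (m / 2) * h ^ 2)) =O[nhds 0] fun h : ℝ => |h| ^ 3)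
    (hv : (fun h : ℝ => v h - (v₀ + g * h + (v₂ / 2) * h ^ 2))
      =O[nhds 0] fun h : ℝ => |h| ^ 3)
    (hpos : ∀ᶠ h in nhds (0 : ℝ), v h > -σₙ ^ 2)
    (S Δ L Q : ℝ)
    (hS : S = v₀ + σₙ ^ 2) (hΔ : Δ = 1 / τ ^ 2 - 1 / S)
    (hL : L = -(g / 2) * Δ) (hQ : Q = -(v₂ / 4) * Δ - g ^ 2 / (4 * S ^ 2)) :
    ∃ C : ℝ,
      (fun h : ℝ =>
          (-((μ h - c) ^ 2 / (2 * τ ^ 2) + (v h + σₙ ^ 2) / (2 * τ ^ 2)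
              - (1 / 2) * Real.log (1 + v h / σₙ ^ 2)))
            - (C + L * h + Q * h ^ 2))
        =O[nhds 0] fun h : ℝ => |h| ^ 3 := by
  have hτ2 : (τ : ℝ) ^ 2 ≠ 0 := pow_ne_zero 2 hτ.ne'
  have hσ2 : (0 : ℝ) < σₙ ^ 2 := by positivity
  have hSpos : 0 < S := by rw [hS]; positivity
  set e : ℝ → ℝ := fun h => v h - (v₀ + g * h + (v₂ / 2) * h ^ 2) with he_def
  set w : ℝ → ℝ := fun h => v h - v₀ with hw_def
  -- w = e + poly
  have hwe : ∀ h, w h = e h + (g * h + (v₂ / 2) * h ^ 2) := by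
    intro h; simp only [he_def, hw_def]; ring
  -- e is O(h^3), hence O(h^2), O(h)
  have he2 : e =O[nhds 0] fun h : ℝ => |h| ^ 2 := hv.trans (abs_pow_isBigO_aux (by norm_num))
  have he1 : e =O[nhds 0] fun h : ℝ => |h| ^ 1 := hv.trans (abs_pow_isBigO_aux (by norm_num))
  -- w is O(h)
  have hwO : w =O[nhds 0] fun h : ℝ => |h| ^ 1 := by
    have hpoly : (fun h : ℝ => g * h + (v₂ / 2) * h ^ 2) =O[nhds 0] fun h : ℝ => |h| ^ 1 := by
      have h1 : (fun h : ℝ => g * h) =O[nhds 0] fun h : ℝ => |h| ^ 1 := by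
        simpa using ((pow_self_isBigO 1).const_mul_left g)
      have h2 : (fun h : ℝ => (v₂ / 2) * h ^ 2) =O[nhds 0] fun h : ℝ => |h| ^ 1 :=
        ((pow_self_isBigO 2).const_mul_left (v₂ / 2)).trans (abs_pow_isBigO_aux (by norm_num))
      exact h1.add h2
    exact (he1.add hpoly).congr_left (fun h => (hwe h).symm)
  -- w tends to 0
  have hw0 : Tendsto w (nhds 0) (nhds 0) := by
    have h3 : Tendsto (fun h : ℝ => |h| ^ 1) (nhds 0) (nhds 0) := by
      have : Continuous fun h : ℝ => |h| ^ 1 := by continuity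
      simpa using this.tendsto 0
    exact hwO.trans_tendsto h3
  -- T1 : -(μ h - c)^2/(2τ²) = O(h³)
  have hμc : (fun h : ℝ => μ h - c) =O[nhds 0] fun h : ℝ => |h| ^ 2 := by
    have h1 : (fun h : ℝ => μ h - (c - (m / 2) * h ^ 2)) =O[nhds 0] fun h : ℝ => |h| ^ 2 :=
      hμ.trans (abs_pow_isBigO_aux (by norm_num))
    have h2 : (fun h : ℝ => -((m / 2) * h ^ 2)) =O[nhds 0] fun h : ℝ => |h| ^ 2 := by
      simpa using ((pow_self_isBigO 2).const_mul_left (m / 2)).neg_left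
    exact (h1.add h2).congr_left (fun h => by ring)
  have hT1 : (fun h : ℝ => -((μ h - c) ^ 2 / (2 * τ ^ 2))) =O[nhds 0]
      fun h : ℝ => |h| ^ 3 := by
    have hsq : (fun h : ℝ => (μ h - c) ^ 2) =O[nhds 0] fun h : ℝ => |h| ^ 4 := by
      have := hμc.mul hμc
      refine (this.congr (fun h => by ring) (fun h => by ring))
    have := (hsq.trans (abs_pow_isBigO_aux (m := 4) (n := 3) (by norm_num))).const_mul_left
      (-(1 / (2 * τ ^ 2)))
    exact this.congr_left (fun h => by ring)
  -- T2 : -e/(2τ²)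
  have hT2 : (fun h : ℝ => -(e h) / (2 * τ ^ 2)) =O[nhds 0] fun h : ℝ => |h| ^ 3 :=
    (hv.const_mul_left (-(1 / (2 * τ ^ 2)))).congr_left (fun h => by simp [he_def]; ring)
  -- T4 : e/(2S)
  have hT4 : (fun h : ℝ => e h / (2 * S)) =O[nhds 0] fun h : ℝ => |h| ^ 3 :=
    (hv.const_mul_left (1 / (2 * S))).congr_left (fun h => by simp [he_def]; ring)
  -- T5 : -((w h)^2 - g²h²)/(4S²)
  have hT5 : (fun h : ℝ => -((w h) ^ 2 - g ^ 2 * h ^ 2) / (4 * S ^ 2)) =O[nhds 0]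
      fun h : ℝ => |h| ^ 3 := by
    have hwm : (fun h : ℝ => w h - g * h) =O[nhds 0] fun h : ℝ => |h| ^ 2 := by
      have hpoly : (fun h : ℝ => (v₂ / 2) * h ^ 2) =O[nhds 0] fun h : ℝ => |h| ^ 2 :=
        (pow_self_isBigO 2).const_mul_left (v₂ / 2)
      have := he2.add hpoly
      exact this.congr_left (fun h => by simp [hwe h]; ring)
    have hwp : (fun h : ℝ => w h + g * h) =O[nhds 0] fun h : ℝ => |h| ^ 1 := by
      have : (fun h : ℝ => g * h) =O[nhds 0] fun h : ℝ => |h| ^ 1 := by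
        simpa using ((pow_self_isBigO 1).const_mul_left g)
      exact hwO.add this
    have hprod := hwm.mul hwp
    have h3 : (fun h : ℝ => (w h - g * h) * (w h + g * h)) =O[nhds 0]
        fun h : ℝ => |h| ^ 3 := hprod.trans_eventuallyEq (Eventually.of_forall fun h => by ring)
    have := h3.const_mul_left (-(1 / (4 * S ^ 2)))
    exact this.congr_left (fun h => by ring)
  -- T3 : log remainder
  have hT3 : (fun h : ℝ =>
      (1 / 2) * (Real.log (v h + σₙ ^ 2) - (Real.log S + w h / S - (w h) ^ 2 / (2 * S ^ 2))))
      =O[nhds 0] fun h : ℝ => |h| ^ 3 := by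
    -- first: remainder is O(|w|^3)
    have hsmall : ∀ᶠ h in nhds (0 : ℝ), |w h / S| ≤ 1 / 2 := by
      have : Tendsto (fun h => w h / S) (nhds 0) (nhds 0) := by
        simpa using hw0.div_const S
      have := (Metric.tendsto_nhds.mp this (1 / 2) (by norm_num))
      filter_upwards [this] with h hh
      rw [Real.dist_eq, sub_zero] at hh
      exact hh.le
    have hbound : (fun h : ℝ =>
        Real.log (v h + σₙ ^ 2) - (Real.log S + w h / S - (w h) ^ 2 / (2 * S ^ 2)))
        =O[nhds 0] fun h : ℝ => |w h| ^ 3 := by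
      refine IsBigO.of_bound (2 / S ^ 3) ?_
      filter_upwards [hsmall, hpos] with h hh hp
      set x : ℝ := -(w h / S) with hx_def
      have hx2 : |x| ≤ 1 / 2 := by rw [hx_def, abs_neg]; exact hh
      have hxlt : |x| < 1 := lt_of_le_of_lt hx2 (by norm_num)
      have key := Real.abs_log_sub_add_sum_range_le hxlt 2
      have hsum : (∑ i ∈ Finset.range 2, x ^ (i + 1) / (i + 1)) = x + x ^ 2 / 2 := by
        norm_num [Finset.sum_range_succ]
      rw [hsum] at key
      have h1x : (1 : ℝ) - x = (v h + σₙ ^ 2) / S := by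
        rw [hx_def, hS]; field_simp [hw_def]; ring
      have hvp : 0 < v h + σₙ ^ 2 := by linarith [hp]
      have hlog : Real.log (1 - x) = Real.log (v h + σₙ ^ 2) - Real.log S := by
        rw [h1x, Real.log_div hvp.ne' hSpos.ne']
      rw [hlog] at key
      have heq : x + x ^ 2 / 2 + (Real.log (v h + σₙ ^ 2) - Real.log S)
          = Real.log (v h + σₙ ^ 2) - (Real.log S + w h / S - (w h) ^ 2 / (2 * S ^ 2)) := by
        rw [hx_def]; field_simp; ring
      rw [heq] at key
      have hxabs : |x| = |w h| / S := by
        rw [hx_def, abs_neg, abs_div, abs_of_pos hSpos]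
      have hden : (1 : ℝ) / 2 ≤ 1 - |x| := by linarith
      calc ‖Real.log (v h + σₙ ^ 2) - (Real.log S + w h / S - (w h) ^ 2 / (2 * S ^ 2))‖
          ≤ |x| ^ 3 / (1 - |x|) := key
        _ ≤ |x| ^ 3 / (1 / 2) := by
            apply div_le_div_of_nonneg_left (by positivity) (by norm_num) hden
        _ = 2 * |x| ^ 3 := by ring
        _ = (2 / S ^ 3) * |w h| ^ 3 := by
            rw [hxabs, div_pow]; field_simp
        _ = (2 / S ^ 3) * ‖|w h| ^ 3‖ := by
            rw [Real.norm_eq_abs]; simp [abs_pow]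
    have hw3 : (fun h : ℝ => |w h| ^ 3) =O[nhds 0] fun h : ℝ => |h| ^ 3 := by
      have := hwO.norm_left.pow 3
      simpa [Real.norm_eq_abs] using this
    exact ((hbound.trans hw3).const_mul_left (1 / 2))
  -- assemble
  refine ⟨-S / (2 * τ ^ 2) + (1 / 2) * Real.log S - (1 / 2) * Real.log (σₙ ^ 2), ?_⟩
  have hsum := (((hT1.add hT2).add hT3).add hT4).add hT5
  refine (EventuallyEq.trans_isBigO ?_ hsum)
  filter_upwards [hpos] with h hp
  have hvp : 0 < v h + σₙ ^ 2 := by linarith [hp]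
  have hlog : Real.log (1 + v h / σₙ ^ 2) = Real.log (v h + σₙ ^ 2) - Real.log (σₙ ^ 2) := by
    rw [show (1 : ℝ) + v h / σₙ ^ 2 = (v h + σₙ ^ 2) / σₙ ^ 2 by field_simp; ring,
      Real.log_div hvp.ne' hσ2.ne']
  rw [hlog]
  simp only [he_def, hw_def, hL, hQ, hΔ, hS]
  field_simp
  ring
end
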